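/- Let n2 be a positive integer, 0 < p2 < p1 < 1, 0 < q1 < 1 and 0 < q2 < 1 with q1/q2 ≥ p1/p2. Set n1 = (p2/p1)·n2 and suppose ⌈n1⌉ < n2 and ⌊n1⌋ ≥ 1. Then for every real x with 0 ≤ x ≤ n2·q2 − 1, F_{⌊n1⌋, q1}(x) < F_{n2, q2}(x) + sqrt(q1/(2·e·⌊n1⌋·(1−q1)))·𝟙{⌊n1⌋ ≠ ⌈n1⌉}. -/

import Mathlib

/-- The probability mass function of the Binomial(n, p) distribution. -/
noncomputable def binomPMF (n : ℕ) (p : ℝ) (k : ℕ) : ℝ :=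
  (n.choose k : ℝ) * p ^ k * (1 - p) ^ (n - k)

/-- The cumulative distribution function of the Binomial(n, p) distribution,
`F_{n,p}(x) = P(Bin(n,p) ≤ x)`. -/
noncomputable def binomCDF (n : ℕ) (p : ℝ) (x : ℝ) : ℝ :=
  ∑ k ∈ Finset.range (n + 1), if (k : ℝ) ≤ x then binomPMF n p k else 0

/-- The quantile function `F_{n,p}⁻¹(u) = inf {x : F_{n,p}(x) ≥ u}`. -/
noncomputable def binomQuantile (n : ℕ) (p : ℝ) (u : ℝ) : ℝ :=
  sInf {x : ℝ | u ≤ binomCDF n p x}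

/-!
Write `k = ⌊x⌋₊`, `μ = n2 * q2 ≥ k + 1` and `b_{n,p}(k)` for the binomial mass. Since
`∂ₚ F_{n+1,p}(k) = -(n+1) b_{n,p}(k)`, the CDF `F_{n,p}(k)` decreases in `p`, and together with
`F_{n,p}(k) = F_{n+1,p}(k) + p b_{n,p}(k)` the mean value theorem shows that `n ↦ F_{n,μ/n}(k)`
strictly increases for `n > μ`. As `μ ≤ n1 q1 ≤ ⌈n1⌉ q1`, this gives
`F_{⌈n1⌉,q1}(k) < F_{n2,q2}(k)`. If `n1` is not an integer then `⌈n1⌉ = m + 1` with `m = ⌊n1⌋`,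
and the gap `F_{m,q1}(k) - F_{m+1,q1}(k) = q1 b_{m,q1}(k)`, measured against the penalty,
decreases in `q1` on the admissible range `q1 ≥ (k+1)/(m+1)`. At its left end Stirling's bounds
`2π n^(2n+1) ≤ (n!)² e^(2n) ≤ e⁴/8 · n^(2n+1)` (the upper one for `n ≥ 2`) and `e⁵ ≤ 16π²`
bound it by `√(q1 / (2e m (1 - q1)))`.
-/

open Finset Polynomial Real Stirling
open scoped Nat

lemma binomPMF_eq_eval_bernsteinPolynomial (n k : ℕ) (p : ℝ) :
    binomPMF n p k = (bernsteinPolynomial ℝ n k).eval p := by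
  simp [binomPMF, bernsteinPolynomial]

lemma binomPMF_nonneg (n k : ℕ) {p : ℝ} (hp₀ : 0 ≤ p) (hp₁ : p ≤ 1) :
    0 ≤ binomPMF n p k := by
  have : 0 ≤ 1 - p := by linarith
  unfold binomPMF; positivity

lemma binomCDF_natCast (n k : ℕ) (p : ℝ) :
    binomCDF n p k = ∑ j ∈ range (k + 1), binomPMF n p j := by
  rw [binomCDF, ← sum_filter]
  refine sum_subset (fun j hj ↦ ?_) fun j hj hj' ↦ ?_
  · simp only [mem_filter, mem_range, Nat.cast_le] at hj ⊢; omega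
  · simp only [mem_filter, mem_range, Nat.cast_le, not_and] at hj hj'
    simp [binomPMF, Nat.choose_eq_zero_of_lt (by omega : n < j)]

lemma binomCDF_floor (n : ℕ) (p : ℝ) {x : ℝ} (hx : 0 ≤ x) :
    binomCDF n p x = binomCDF n p ⌊x⌋₊ := by
  refine sum_congr rfl fun j _ ↦ if_congr ?_ rfl rfl
  rw [Nat.cast_le, Nat.le_floor_iff hx]

lemma bernsteinPolynomial_succ_succ (R : Type*) [CommRing R] (n ν : ℕ) :
    bernsteinPolynomial R (n + 1) (ν + 1) =
      X * bernsteinPolynomial R n ν + (1 - X) * bernsteinPolynomial R n (ν + 1) := by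
  rcases lt_or_ge ν n with h | h
  · obtain ⟨d, rfl⟩ := Nat.exists_eq_add_of_lt h
    simp only [bernsteinPolynomial, Nat.choose_succ_succ, Nat.cast_add,
      show ν + d + 1 + 1 - (ν + 1) = d + 1 by omega, show ν + d + 1 - ν = d + 1 by omega,
      show ν + d + 1 - (ν + 1) = d by omega]
    ring
  · obtain ⟨d, rfl⟩ := Nat.exists_eq_add_of_le h
    rcases d with _ | d
    · simp [bernsteinPolynomial, pow_succ]; ring
    · simp [bernsteinPolynomial, Nat.choose_eq_zero_of_lt]

lemma derivative_sum_bernsteinPolynomial (R : Type*) [CommRing R] (n k : ℕ) :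
    derivative (∑ j ∈ range (k + 1), bernsteinPolynomial R (n + 1) j) =
      -(n + 1) * bernsteinPolynomial R n k := by
  induction k with
  | zero => simp [bernsteinPolynomial.derivative_zero]
  | succ k ih =>
    rw [sum_range_succ, derivative_add, ih, bernsteinPolynomial.derivative_succ_aux]
    ring

lemma binomCDF_succ_add_mul_binomPMF (n k : ℕ) (p : ℝ) :
    binomCDF (n + 1) p k + p * binomPMF n p k = binomCDF n p k := by
  simp only [binomCDF_natCast]
  induction k with
  | zero => simp [binomPMF, pow_succ]; ring
  | succ k ih =>
    simp only [sum_range_succ _ (k + 1), binomPMF_eq_eval_bernsteinPolynomial,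
      bernsteinPolynomial_succ_succ] at ih ⊢
    simp only [eval_add, eval_mul, eval_X, eval_sub, eval_one]
    linear_combination ih

lemma hasDerivAt_binomCDF_succ (n k : ℕ) (p : ℝ) :
    HasDerivAt (fun p ↦ binomCDF (n + 1) p k) (-(n + 1) * binomPMF n p k) p := by
  simp only [binomCDF_natCast, binomPMF_eq_eval_bernsteinPolynomial, ← eval_finsetSum]
  have := Polynomial.hasDerivAt (∑ j ∈ range (k + 1), bernsteinPolynomial ℝ (n + 1) j) p
  rwa [derivative_sum_bernsteinPolynomial, eval_mul, eval_neg, eval_add, eval_natCast,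
    eval_one] at this

lemma binomCDF_antitoneOn (n k : ℕ) : AntitoneOn (fun p ↦ binomCDF n p k) (Set.Icc 0 1) := by
  rcases n with _ | n
  · intro a _ b _ _
    simp [binomCDF_natCast, binomPMF, sum_range_succ']
  refine antitoneOn_of_deriv_nonpos (convex_Icc 0 1)
    (fun p _ ↦ (hasDerivAt_binomCDF_succ n k p).continuousAt.continuousWithinAt)
    (fun p _ ↦ (hasDerivAt_binomCDF_succ n k p).differentiableAt.differentiableWithinAt)
    fun p hp ↦ ?_
  rw [interior_Icc] at hp
  rw [(hasDerivAt_binomCDF_succ n k p).deriv]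
  have := binomPMF_nonneg n k hp.1.le hp.2.le
  nlinarith

lemma natCast_mul_pow_pred_mul_self (a : ℕ) (t : ℝ) : a * t ^ (a - 1) * t = a * t ^ a := by
  rcases a with _ | a
  · simp
  · simp [pow_succ, mul_assoc]

lemma pow_mul_one_sub_pow_strictAntiOn (a b : ℕ) (hab : a + b ≠ 0) :
    StrictAntiOn (fun t : ℝ ↦ t ^ a * (1 - t) ^ b) (Set.Icc (a / (a + b)) 1) := by
  have hd (t : ℝ) : HasDerivAt (fun t : ℝ ↦ t ^ a * (1 - t) ^ b)
      (a * t ^ (a - 1) * (1 - t) ^ b - t ^ a * (b * (1 - t) ^ (b - 1))) t :=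
    ((hasDerivAt_pow a t).fun_mul (((hasDerivAt_id' t).const_sub 1).fun_pow b)).congr_deriv
      (by ring)
  refine strictAntiOn_of_deriv_neg (convex_Icc _ _)
    (fun t _ ↦ (hd t).continuousAt.continuousWithinAt) fun t ht ↦ ?_
  rw [interior_Icc] at ht
  rw [(hd t).deriv]
  have hab' : (0 : ℝ) < a + b := by exact_mod_cast Nat.pos_of_ne_zero hab
  have ht₀ : 0 < t := lt_of_le_of_lt (by positivity) ht.1
  have ht₁ : 0 < 1 - t := by linarith [ht.2]
  have hmode : a - (a + b) * t < 0 := by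
    have := (div_lt_iff₀ hab').1 ht.1; linarith
  have hprod : (a * t ^ (a - 1) * (1 - t) ^ b - t ^ a * (b * (1 - t) ^ (b - 1))) * (t * (1 - t)) =
      t ^ a * (1 - t) ^ b * (a - (a + b) * t) := by
    have e₁ := natCast_mul_pow_pred_mul_self a t
    have e₂ := natCast_mul_pow_pred_mul_self b (1 - t)
    linear_combination (1 - t) ^ b * (1 - t) * e₁ - t ^ a * t * e₂
  have : t ^ a * (1 - t) ^ b * (a - (a + b) * t) < 0 :=
    mul_neg_of_pos_of_neg (by positivity) hmode
  exact neg_of_mul_neg_left (hprod ▸ this) (by positivity)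

lemma binomPMF_strictAntiOn {n k : ℕ} (hkn : k < n) :
    StrictAntiOn (fun p ↦ binomPMF n p k) (Set.Icc (k / n) 1) := by
  have hC : (0 : ℝ) < n.choose k := by exact_mod_cast Nat.choose_pos hkn.le
  have h := pow_mul_one_sub_pow_strictAntiOn k (n - k) (by omega)
  rw [Nat.cast_sub hkn.le, add_sub_cancel] at h
  intro p hp q hq hpq
  simpa only [binomPMF, mul_assoc] using mul_lt_mul_of_pos_left (h hp hq hpq) hC

lemma binomCDF_div_lt_binomCDF_succ_div {n k : ℕ} {μ : ℝ} (hkμ : k + 1 ≤ μ)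
    (hμn : μ < n) :
    binomCDF n (μ / n) k < binomCDF (n + 1) (μ / (n + 1)) k := by
  have hn : (0 : ℝ) < n := by linarith [(k.cast_nonneg : (0 : ℝ) ≤ k)]
  have hkn : k < n := by exact_mod_cast (by linarith : (k : ℝ) < n)
  set p := μ / n with hp
  set p' := μ / (n + 1) with hp'
  have hp'p : p' < p := div_lt_div_of_pos_left (by linarith) hn (by linarith)
  have hp'_mem : p' ∈ Set.Icc (k / n : ℝ) 1 := by
    refine ⟨?_, by linarith [(div_lt_one hn).2 hμn]⟩
    rw [hp', div_le_div_iff₀ hn (by linarith)]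
    nlinarith [(Nat.cast_le.2 hkn.le : (k : ℝ) ≤ n)]
  have hp_mem : p ∈ Set.Icc (k / n : ℝ) 1 :=
    ⟨hp'_mem.1.trans hp'p.le, ((div_lt_one hn).2 hμn).le⟩
  obtain ⟨ξ, hξ, hslope⟩ := exists_hasDerivAt_eq_slope (fun p ↦ binomCDF (n + 1) p k)
    (fun p ↦ -(n + 1) * binomPMF n p k) hp'p
    (fun p _ ↦ (hasDerivAt_binomCDF_succ n k p).continuousAt.continuousWithinAt)
    fun p _ ↦ hasDerivAt_binomCDF_succ n k p
  -- `F_{n+1}(p') - F_{n+1}(p) = (n+1)(p - p') b_{n,ξ}(k) = p b_{n,ξ}(k) > p b_{n,p}(k)`,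
  -- as `b_n(·, k)` decreases past its mode `k / n ≤ p'`
  rw [eq_div_iff (by linarith)] at hslope
  have hξp : binomPMF n p k < binomPMF n ξ k :=
    binomPMF_strictAntiOn hkn ⟨hp'_mem.1.trans hξ.1.le, hξ.2.le.trans hp_mem.2⟩ hp_mem hξ.2
  have hgap : (n + 1) * (p - p') = p := by
    rw [hp, hp']; field_simp; ring
  have hξ' : (n + 1) * binomPMF n ξ k * (p - p') = p * binomPMF n ξ k := by
    linear_combination binomPMF n ξ k * hgap
  have hp₀ : 0 < p := div_pos (by linarith [(k.cast_nonneg : (0 : ℝ) ≤ k)]) hn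
  linarith [mul_lt_mul_of_pos_left hξp hp₀, binomCDF_succ_add_mul_binomPMF n k p]

lemma binomCDF_div_lt_binomCDF_div {s t k : ℕ} {μ : ℝ} (hkμ : k + 1 ≤ μ) (hμs : μ < s)
    (hst : s < t) : binomCDF s (μ / s) k < binomCDF t (μ / t) k := by
  refine Nat.rel_of_forall_rel_succ_of_le_of_lt (β := ℝ) (· < ·)
    (f := fun n : ℕ ↦ binomCDF n (μ / n) k) (fun n hn ↦ ?_) le_rfl hst
  have hμn : μ < n := hμs.trans_le (by exact_mod_cast hn)
  simpa using binomCDF_div_lt_binomCDF_succ_div hkμ hμn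

lemma binomCDF_lt_binomCDF_of_lt_of_mul_le {c n k : ℕ} {p q : ℝ} (hcn : c < n)
    (hk : k + 1 ≤ n * q) (hqp : n * q ≤ c * p) (hp : p < 1) :
    binomCDF c p k < binomCDF n q k := by
  have hcp : 0 < c * p := by linarith [(k.cast_nonneg : (0 : ℝ) ≤ k)]
  have hc : (0 : ℝ) < c := Nat.cast_pos.2 (Nat.pos_of_ne_zero (by rintro rfl; simp at hcp))
  have hp₀ : 0 < p := pos_of_mul_pos_right hcp hc.le
  have hqp' : n * q / c ≤ p := (div_le_iff₀' hc).2 hqp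
  calc binomCDF c p k ≤ binomCDF c (n * q / c) k :=
        binomCDF_antitoneOn c k
          ⟨div_nonneg (by linarith [(k.cast_nonneg : (0 : ℝ) ≤ k)]) hc.le, by linarith⟩
          ⟨hp₀.le, hp.le⟩ hqp'
    _ < binomCDF n (n * q / n) k := binomCDF_div_lt_binomCDF_div hk (by nlinarith) hcn
    _ = binomCDF n q k := by
        rw [mul_div_cancel_left₀ _ (Nat.cast_ne_zero.2 (by omega))]

lemma div_exp_one_pow_sq_mul (n : ℕ) :
    ((n / exp 1) ^ n) ^ 2 * exp 1 ^ (2 * n) = (n : ℝ) ^ (2 * n) := by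
  rw [← pow_mul, mul_comm n 2, div_pow, div_mul_cancel₀ _ (by positivity)]

lemma two_pi_mul_pow_le_factorial_sq_mul_exp (n : ℕ) :
    2 * π * n ^ (2 * n + 1) ≤ (n ! : ℝ) ^ 2 * exp 1 ^ (2 * n) := by
  have h := pow_le_pow_left₀ (by positivity) (le_factorial_stirling n) 2
  rw [mul_pow, sq_sqrt (by positivity)] at h
  calc 2 * π * n ^ (2 * n + 1) = 2 * π * n * (((n / exp 1) ^ n) ^ 2 * exp 1 ^ (2 * n)) := by
        rw [div_exp_one_pow_sq_mul]; ring
    _ ≤ (n ! : ℝ) ^ 2 * exp 1 ^ (2 * n) := by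
        rw [← mul_assoc]; gcongr

lemma stirlingSeq_two : stirlingSeq 2 = exp 1 ^ 2 / 4 := by
  have : √(2 * 2 : ℝ) = 2 := by
    rw [show (2 * 2 : ℝ) = 2 ^ 2 by norm_num, sqrt_sq (by norm_num)]
  rw [stirlingSeq, Nat.cast_ofNat, this, Nat.factorial_two]
  field_simp
  norm_num

lemma factorial_sq_mul_exp_le {n : ℕ} (hn : 2 ≤ n) :
    (n ! : ℝ) ^ 2 * exp 1 ^ (2 * n) ≤ exp 1 ^ 4 / 8 * n ^ (2 * n + 1) := by
  have hs : stirlingSeq n ≤ exp 1 ^ 2 / 4 := by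
    obtain ⟨m, rfl⟩ : ∃ m, n = m + 1 := ⟨n - 1, by omega⟩
    exact stirlingSeq_two ▸ stirlingSeq'_antitone (by omega : 1 ≤ m)
  rw [stirlingSeq, div_le_iff₀ (by positivity)] at hs
  calc (n ! : ℝ) ^ 2 * exp 1 ^ (2 * n) ≤
      (exp 1 ^ 2 / 4 * (√(2 * n) * (n / exp 1) ^ n)) ^ 2 * exp 1 ^ (2 * n) := by gcongr
    _ = exp 1 ^ 4 / 8 * n ^ (2 * n + 1) := by
        rw [mul_pow, mul_pow, sq_sqrt (by positivity), mul_assoc, mul_assoc (2 * (n : ℝ)),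
          div_exp_one_pow_sq_mul]
        ring

lemma exp_one_pow_five_le : exp 1 ^ 5 ≤ 16 * π ^ 2 := by
  have h₁ := exp_one_lt_d9
  have h₂ := pi_gt_d6
  nlinarith [pow_le_pow_left₀ (exp_pos 1).le h₁.le 5]

lemma two_mul_exp_one_mul_choose_sq_le (a b : ℕ) :
    2 * exp 1 * ((a + b).choose a : ℝ) ^ 2 * a ^ (2 * a + 1) * b ^ (2 * b + 1) ≤
      ((a + b : ℕ) : ℝ) ^ (2 * (a + b) + 1) := by
  rcases Nat.eq_zero_or_pos a with rfl | ha
  · simp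
  rcases Nat.eq_zero_or_pos b with rfl | hb
  · simp
  have hC : ((a + b).choose a : ℝ) * a ! * b ! = (a + b)! := by
    have := Nat.choose_mul_factorial_mul_factorial (Nat.le_add_right a b)
    rw [Nat.add_sub_cancel_left] at this
    exact_mod_cast this
  refine le_of_mul_le_mul_left ?_ (by positivity : (0 : ℝ) < 4 * π ^ 2)
  calc 4 * π ^ 2 * (2 * exp 1 * ((a + b).choose a : ℝ) ^ 2 * a ^ (2 * a + 1) * b ^ (2 * b + 1))
      = 2 * exp 1 * ((a + b).choose a : ℝ) ^ 2 * (2 * π * a ^ (2 * a + 1)) *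
          (2 * π * b ^ (2 * b + 1)) := by ring
    _ ≤ 2 * exp 1 * ((a + b).choose a : ℝ) ^ 2 * ((a ! : ℝ) ^ 2 * exp 1 ^ (2 * a)) *
          ((b ! : ℝ) ^ 2 * exp 1 ^ (2 * b)) := by
        gcongr _ * ?_ * ?_ <;> exact two_pi_mul_pow_le_factorial_sq_mul_exp _
    _ = 2 * exp 1 * (((a + b)! : ℝ) ^ 2 * exp 1 ^ (2 * (a + b))) := by
        rw [← hC]; ring
    _ ≤ 2 * exp 1 * (exp 1 ^ 4 / 8 * ((a + b : ℕ) : ℝ) ^ (2 * (a + b) + 1)) := by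
        gcongr 2 * exp 1 * ?_; exact factorial_sq_mul_exp_le (by omega)
    _ = exp 1 ^ 5 / 4 * ((a + b : ℕ) : ℝ) ^ (2 * (a + b) + 1) := by ring
    _ ≤ 4 * π ^ 2 * ((a + b : ℕ) : ℝ) ^ (2 * (a + b) + 1) := by
        gcongr; linarith [exp_one_pow_five_le]

lemma two_mul_exp_one_mul_choose_sq_mul_pow_le (k l : ℕ) :
    2 * exp 1 * (k + l + 1) * ((k + l + 1).choose k : ℝ) ^ 2 *
      (((k + 1) / (k + l + 2)) ^ (2 * k + 1) * ((l + 1) / (k + l + 2)) ^ (2 * l + 3)) ≤ 1 := by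
  have hchoose : ((k + l + 1).choose k : ℝ) =
      (k + l + 2).choose (k + 1) * (k + 1) / (k + l + 2) := by
    rw [eq_div_iff (by positivity)]
    exact_mod_cast (mul_comm _ _).trans (Nat.add_one_mul_choose_eq (k + l + 1) k)
  have hstir := two_mul_exp_one_mul_choose_sq_le (k + 1) (l + 1)
  rw [show k + 1 + (l + 1) = k + l + 2 by ring] at hstir
  push_cast at hstir
  rw [hchoose]
  generalize ((k + l + 2).choose (k + 1) : ℝ) = C at hstir ⊢
  have hN : (k + l + 1 : ℝ) ≤ k + l + 2 := by linarith
  have hN₀ : (0 : ℝ) < k + l + 2 := by positivity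
  generalize (k + l + 2 : ℝ) = N at hstir hN hN₀ ⊢
  calc _ = (k + l + 1) * (2 * exp 1 * C ^ 2 * (k + 1) ^ (2 * (k + 1) + 1) *
        (l + 1) ^ (2 * (l + 1) + 1)) / N ^ (2 * (k + l + 2) + 2) := by
        simp only [div_pow]; field_simp; ring
    _ ≤ N * N ^ (2 * (k + l + 2) + 1) / N ^ (2 * (k + l + 2) + 2) := by gcongr
    _ = 1 := by field_simp; ring

lemma two_mul_exp_one_mul_one_sub_mul_mul_binomPMF_sq_le {m k : ℕ} {p : ℝ}
    (hk : k + 1 ≤ (m + 1) * p) (hp : p < 1) :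
    2 * exp 1 * m * (1 - p) * (p * binomPMF m p k) ^ 2 ≤ p := by
  have hkm : k < m := by
    have : (k : ℝ) < m := by nlinarith
    exact_mod_cast this
  obtain ⟨l, rfl⟩ := Nat.exists_eq_add_of_lt hkm
  push_cast at hk ⊢
  have hp₀ : 0 < p := by nlinarith [(k.cast_nonneg : (0 : ℝ) ≤ k)]
  have hN : (0 : ℝ) < k + l + 2 := by positivity
  have hPp : (k + 1) / (k + l + 2) ≤ p := by rw [div_le_iff₀ hN]; linarith
  -- `(k + 1) / (k + l + 2)` lies past the mode of `t ↦ t ^ (2k+1) (1 - t) ^ (2l+3)`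
  have hmode : ((2 * k + 1 : ℕ) : ℝ) / ((2 * k + 1 : ℕ) + (2 * l + 3 : ℕ)) ≤
      (k + 1) / (k + l + 2) := by
    rw [div_le_div_iff₀ (by positivity) hN]; push_cast; nlinarith
  have hanti := (pow_mul_one_sub_pow_strictAntiOn (2 * k + 1) (2 * l + 3) (by omega)).antitoneOn
    ⟨hmode, hPp.trans hp.le⟩ ⟨hmode.trans hPp, hp.le⟩ hPp
  have h1P : 1 - (k + 1) / (k + l + 2) = ((l + 1) / (k + l + 2) : ℝ) := by field_simp; ring
  simp only [h1P] at hanti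
  calc 2 * exp 1 * (k + l + 1) * (1 - p) * (p * binomPMF (k + l + 1) p k) ^ 2
      = p * (2 * exp 1 * (k + l + 1) * ((k + l + 1).choose k : ℝ) ^ 2 *
          (p ^ (2 * k + 1) * (1 - p) ^ (2 * l + 3))) := by
        rw [binomPMF, show k + l + 1 - k = l + 1 by omega]; ring
    _ ≤ p * 1 := by
        gcongr
        exact (mul_le_mul_of_nonneg_left hanti (by positivity)).trans
          (two_mul_exp_one_mul_choose_sq_mul_pow_le k l)
    _ = p := mul_one p

lemma mul_binomPMF_le_sqrt {m k : ℕ} {p : ℝ} (hk : k + 1 ≤ (m + 1) * p) (hp : p < 1) :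
    p * binomPMF m p k ≤ √(p / (2 * exp 1 * m * (1 - p))) := by
  have hm : (0 : ℝ) < m := by nlinarith [(k.cast_nonneg : (0 : ℝ) ≤ k)]
  have h1p : 0 < 1 - p := by linarith
  refine le_sqrt_of_sq_le ((le_div_iff₀ (by positivity)).2 ?_)
  linarith [two_mul_exp_one_mul_one_sub_mul_mul_binomPMF_sq_le hk hp]

theorem binomCDF_floor_lt_add_penalty_general
    (n2 : ℕ)
    (p1 p2 q1 q2 : ℝ)
    (hp2 : 0 < p2) (hp12 : p2 < p1)
    (hq1 : 0 < q1) (hq1' : q1 < 1) (hq2 : 0 < q2)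
    (hratio : q1 / q2 ≥ p1 / p2)
    (n1 : ℝ) (hn1 : n1 = (p2 / p1) * n2)
    (hceil : ⌈n1⌉₊ < n2) :
    ∀ x : ℝ, 0 ≤ x → x ≤ (n2 : ℝ) * q2 - 1 →
      binomCDF ⌊n1⌋₊ q1 x <
        binomCDF n2 q2 x +
          Real.sqrt (q1 / (2 * Real.exp 1 * ⌊n1⌋₊ * (1 - q1))) *
            (if ⌊n1⌋₊ = ⌈n1⌉₊ then 0 else 1) := by
  intro x hx₀ hx
  rw [binomCDF_floor _ _ hx₀, binomCDF_floor _ _ hx₀]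
  have hk : (⌊x⌋₊ : ℝ) + 1 ≤ n2 * q2 := by linarith [Nat.floor_le hx₀]
  have hmean : n2 * q2 ≤ ⌈n1⌉₊ * q1 := by
    have hpq : p1 * q2 ≤ q1 * p2 := (div_le_div_iff₀ hp2 hq2).1 hratio
    calc (n2 : ℝ) * q2 ≤ n1 * q1 := by
          rw [hn1, div_mul_eq_mul_div, div_mul_eq_mul_div, le_div_iff₀ (hp2.trans hp12)]
          nlinarith [(n2.cast_nonneg : (0 : ℝ) ≤ n2)]
      _ ≤ ⌈n1⌉₊ * q1 := mul_le_mul_of_nonneg_right (Nat.le_ceil n1) hq1.le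
  have hlt := binomCDF_lt_binomCDF_of_lt_of_mul_le hceil hk hmean hq1'
  by_cases hint : ⌊n1⌋₊ = ⌈n1⌉₊
  · simpa [hint] using hlt
  rw [if_neg hint, mul_one]
  have hceil_eq : ⌈n1⌉₊ = ⌊n1⌋₊ + 1 := by
    have := Nat.floor_le_ceil n1; have := Nat.ceil_le_floor_add_one n1; omega
  rw [hceil_eq] at hlt hmean
  push_cast at hmean
  linarith [binomCDF_succ_add_mul_binomPMF ⌊n1⌋₊ ⌊x⌋₊ q1,
    mul_binomPMF_le_sqrt (hk.trans hmean) hq1']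

theorem binomCDF_floor_lt_add_penalty
    (n2 : ℕ) (hn2 : 0 < n2)
    (p1 p2 q1 q2 : ℝ)
    (hp2 : 0 < p2) (hp12 : p2 < p1) (hp1 : p1 < 1)
    (hq1 : 0 < q1) (hq1' : q1 < 1) (hq2 : 0 < q2) (hq2' : q2 < 1)
    (hratio : q1 / q2 ≥ p1 / p2)
    (n1 : ℝ) (hn1 : n1 = (p2 / p1) * n2)
    (hceil : ⌈n1⌉₊ < n2) (hfloor : 1 ≤ ⌊n1⌋₊) :
    ∀ x : ℝ, 0 ≤ x → x ≤ (n2 : ℝ) * q2 - 1 →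
      binomCDF ⌊n1⌋₊ q1 x <
        binomCDF n2 q2 x +
          Real.sqrt (q1 / (2 * Real.exp 1 * ⌊n1⌋₊ * (1 - q1))) *
            (if ⌊n1⌋₊ = ⌈n1⌉₊ then 0 else 1) :=
  binomCDF_floor_lt_add_penalty_general n2 p1 p2 q1 q2 hp2 hp12 hq1 hq1' hq2 hratio n1 hn1 hceil
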